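/- arXiv:1309.1222 — 4 statements merged into one kernel-verified Lean document; each statement's English description precedes it below -/
import Mathlib

section
/- Let g₁₁, g₂₂ > 0, g₁₂ > √(g₁₁g₂₂), μ > 0, a = √μ/g₁₁^{1/4}, b = √μ/g₂₂^{1/4}. If (u₁,u₂) is a C² solution on ℝ of −u₁'' + g₁₁(u₁² − a²)u₁ + g₁₂u₁u₂² = 0, −u₂'' + g₂₂(u₂² − b²)u₂ + g₁₂u₁²u₂ = 0 with u₁', u₂' ∈ L²(ℝ) and boundary conditions (u₁,u₂) → (a,0) as x → +∞, (u₁,u₂) → (0,b) as x → −∞, then u₁(x)²/a² + u₂(x)²/b² ≤ 1 for all x ∈ ℝ. -/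
/-!
With `sᵢ = √gᵢᵢ`, the claim is `φ ≤ 0` for `φ = s₁ u₁² + s₂ u₂² - μ`. The boundary conditions give
`φ → 0` at `±∞`, so if `φ` were positive somewhere it would attain a positive global maximum.
There `φ'' ≤ 0`, whereas the equations give
`φ''/2 = s₁ u₁'² + s₂ u₂'² + (g₁₁ u₁² + g₂₂ u₂²) φ + (g₁₂ - s₁ s₂)(s₁ + s₂) u₁² u₂² > 0`.
-/

open Filter MeasureTheory Topology

theorem IsLocalMax.deriv_deriv_nonpos {f : ℝ → ℝ} {x : ℝ} (h : IsLocalMax f x)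
    (hc : ContinuousAt f x) : deriv (deriv f) x ≤ 0 := by
  by_contra! hpos
  have hmin : IsLocalMin f x := isLocalMin_of_deriv_deriv_pos hpos h.deriv_eq_zero hc
  have hconst : f =ᶠ[𝓝 x] fun _ => f x := (h.and hmin).mono fun _ hy => le_antisymm hy.1 hy.2
  rw [hconst.deriv.deriv_eq] at hpos
  simp at hpos

theorem nonpos_of_tendsto_zero_of_deriv_deriv_pos {φ : ℝ → ℝ} (hφ : Continuous φ)
    (hbot : Tendsto φ atBot (𝓝 0)) (htop : Tendsto φ atTop (𝓝 0))
    (h : ∀ x, 0 < φ x → 0 < deriv (deriv φ) x) (x : ℝ) : φ x ≤ 0 := by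
  by_contra! hx
  have hco : Tendsto φ (cocompact ℝ) (𝓝 0) := by
    rw [cocompact_eq_atBot_atTop]; exact hbot.sup htop
  obtain ⟨z, hz⟩ := hφ.exists_forall_ge' x ((hco.eventually_lt_const hx).mono fun _ => le_of_lt)
  have hmax : IsLocalMax φ z := Eventually.of_forall hz
  exact (h z (hx.trans_le (hz x))).not_ge (hmax.deriv_deriv_nonpos hφ.continuousAt)

theorem rpow_one_div_four_sq {g : ℝ} (hg : 0 ≤ g) : (g ^ ((1 : ℝ) / 4)) ^ 2 = √g := by
  rw [← Real.rpow_natCast, ← Real.rpow_mul hg, Real.sqrt_eq_rpow]; norm_num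

theorem deriv_deriv_weighted_sq_sub {u v : ℝ → ℝ} (hu : ContDiff ℝ 2 u) (hv : ContDiff ℝ 2 v)
    (p q c x : ℝ) :
    deriv (deriv fun y => p * u y ^ 2 + q * v y ^ 2 - c) x =
      2 * p * (deriv u x ^ 2 + u x * deriv (deriv u) x)
        + 2 * q * (deriv v x ^ 2 + v x * deriv (deriv v) x) := by
  have hd : ∀ {w : ℝ → ℝ}, ContDiff ℝ 2 w → ∀ y, HasDerivAt w (deriv w y) y :=
    fun hw y => (hw.differentiable two_ne_zero y).hasDerivAt
  have hd' : ∀ {w : ℝ → ℝ}, ContDiff ℝ 2 w → ∀ y, HasDerivAt (deriv w) (deriv (deriv w) y) y :=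
    fun hw y => (hw.differentiable_deriv_two y).hasDerivAt
  have hfirst : deriv (fun y => p * u y ^ 2 + q * v y ^ 2 - c) =
      fun y => 2 * p * (u y * deriv u y) + 2 * q * (v y * deriv v y) := by
    ext y
    exact (((((hd hu y).pow 2).const_mul p).add (((hd hv y).pow 2).const_mul q)).sub_const c
      |>.deriv).trans (by ring)
  rw [hfirst]
  exact ((((hd hu x).mul (hd' hu x)).const_mul (2 * p)).add
    (((hd hv x).mul (hd' hv x)).const_mul (2 * q))).deriv.trans (by ring)

theorem gp_reaction_pos_of_outside_ellipse {g₁₁ g₂₂ g₁₂ μ a b s₁ s₂ : ℝ}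
    (hs₁ : 0 < s₁) (hs₂ : 0 < s₂) (hμ : 0 ≤ μ)
    (hg₁₁ : s₁ ^ 2 = g₁₁) (hg₂₂ : s₂ ^ 2 = g₂₂) (hg₁₂ : s₁ * s₂ ≤ g₁₂)
    (ha : s₁ * a ^ 2 = μ) (hb : s₂ * b ^ 2 = μ)
    {A B : ℝ} (hout : μ < s₁ * A ^ 2 + s₂ * B ^ 2) :
    0 < s₁ * A * (g₁₁ * (A ^ 2 - a ^ 2) * A + g₁₂ * A * B ^ 2)
      + s₂ * B * (g₂₂ * (B ^ 2 - b ^ 2) * B + g₁₂ * A ^ 2 * B) := by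
  have hsplit : s₁ * A * (g₁₁ * (A ^ 2 - a ^ 2) * A + g₁₂ * A * B ^ 2)
      + s₂ * B * (g₂₂ * (B ^ 2 - b ^ 2) * B + g₁₂ * A ^ 2 * B)
      = (g₁₁ * A ^ 2 + g₂₂ * B ^ 2) * (s₁ * A ^ 2 + s₂ * B ^ 2 - μ)
        + (g₁₂ - s₁ * s₂) * (s₁ + s₂) * A ^ 2 * B ^ 2 := by
    linear_combination (-s₁ ^ 2 * A ^ 2) * ha + (-s₂ ^ 2 * B ^ 2) * hb
      + (s₂ * A ^ 2 * B ^ 2 - μ * A ^ 2 + s₁ * A ^ 2 * a ^ 2) * hg₁₁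
      + (s₁ * A ^ 2 * B ^ 2 - μ * B ^ 2 + s₂ * B ^ 2 * b ^ 2) * hg₂₂
  have hweight : 0 < g₁₁ * A ^ 2 + g₂₂ * B ^ 2 := by
    rw [← hg₁₁, ← hg₂₂]
    -- `(s₁ + s₂)(s₁²A² + s₂²B²) ≥ s₁ s₂ (s₁A² + s₂B²) > s₁ s₂ μ ≥ 0`
    nlinarith [mul_pos (mul_pos hs₁ hs₂) (hμ.trans_lt hout),
      mul_nonneg (pow_pos hs₁ 3).le (sq_nonneg A), mul_nonneg (pow_pos hs₂ 3).le (sq_nonneg B)]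
  have hcross : 0 ≤ (g₁₂ - s₁ * s₂) * (s₁ + s₂) * A ^ 2 * B ^ 2 := by
    have := sub_nonneg.mpr hg₁₂
    positivity
  rw [hsplit]
  nlinarith [mul_pos hweight (sub_pos.mpr hout)]

theorem pointwise_ellipse_bound_general
    (g₁₁ g₂₂ g₁₂ μ a b : ℝ)
    (hg₁₁ : 0 < g₁₁) (hg₂₂ : 0 < g₂₂)
    (hg₁₂ : Real.sqrt (g₁₁ * g₂₂) < g₁₂) (hμ : 0 < μ)
    (ha : a = Real.sqrt μ / g₁₁ ^ ((1:ℝ)/4))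
    (hb : b = Real.sqrt μ / g₂₂ ^ ((1:ℝ)/4))
    (u₁ u₂ : ℝ → ℝ)
    (hu₁ : ContDiff ℝ 2 u₁) (hu₂ : ContDiff ℝ 2 u₂)
    (heq₁ : ∀ x, -(deriv (deriv u₁) x) + g₁₁ * (u₁ x ^ 2 - a^2) * u₁ x
      + g₁₂ * u₁ x * u₂ x ^ 2 = 0)
    (heq₂ : ∀ x, -(deriv (deriv u₂) x) + g₂₂ * (u₂ x ^ 2 - b^2) * u₂ x
      + g₁₂ * u₁ x ^ 2 * u₂ x = 0)
    (hplus : Tendsto (fun x => (u₁ x, u₂ x)) atTop (nhds (a, 0)))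
    (hminus : Tendsto (fun x => (u₁ x, u₂ x)) atBot (nhds (0, b))) :
    ∀ x : ℝ, u₁ x ^ 2 / a^2 + u₂ x ^ 2 / b^2 ≤ 1 := by
  intro x
  set s₁ := √g₁₁
  set s₂ := √g₂₂
  have hs₁ : 0 < s₁ := Real.sqrt_pos.mpr hg₁₁
  have hs₂ : 0 < s₂ := Real.sqrt_pos.mpr hg₂₂
  have ha₂ : a ^ 2 = μ / s₁ := by
    rw [ha, div_pow, Real.sq_sqrt hμ.le, rpow_one_div_four_sq hg₁₁.le]
  have hb₂ : b ^ 2 = μ / s₂ := by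
    rw [hb, div_pow, Real.sq_sqrt hμ.le, rpow_one_div_four_sq hg₂₂.le]
  have hsa : s₁ * a ^ 2 = μ := by rw [ha₂, mul_div_cancel₀ μ hs₁.ne']
  have hsb : s₂ * b ^ 2 = μ := by rw [hb₂, mul_div_cancel₀ μ hs₂.ne']
  let φ : ℝ → ℝ := fun y => s₁ * u₁ y ^ 2 + s₂ * u₂ y ^ 2 - μ
  have hlim {l : Filter ℝ} {p : ℝ × ℝ} (h : Tendsto (fun y => (u₁ y, u₂ y)) l (𝓝 p)) :
      Tendsto φ l (𝓝 (s₁ * p.1 ^ 2 + s₂ * p.2 ^ 2 - μ)) :=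
    (((h.fst_nhds.pow 2).const_mul s₁).add ((h.snd_nhds.pow 2).const_mul s₂)).sub_const μ
  have hφx : φ x ≤ 0 := by
    refine nonpos_of_tendsto_zero_of_deriv_deriv_pos (by fun_prop) ?_ ?_ (fun y hy => ?_) x
    · simpa [hsb] using hlim hminus
    · simpa [hsa] using hlim hplus
    have hR := gp_reaction_pos_of_outside_ellipse hs₁ hs₂ hμ.le (Real.sq_sqrt hg₁₁.le)
      (Real.sq_sqrt hg₂₂.le) (Real.sqrt_mul hg₁₁.le g₂₂ ▸ hg₁₂).le hsa hsb
      (A := u₁ y) (B := u₂ y) (by linarith [hy])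
    have h₁ : deriv (deriv u₁) y = g₁₁ * (u₁ y ^ 2 - a ^ 2) * u₁ y + g₁₂ * u₁ y * u₂ y ^ 2 := by
      linarith [heq₁ y]
    have h₂ : deriv (deriv u₂) y = g₂₂ * (u₂ y ^ 2 - b ^ 2) * u₂ y + g₁₂ * u₁ y ^ 2 * u₂ y := by
      linarith [heq₂ y]
    rw [deriv_deriv_weighted_sq_sub hu₁ hu₂, h₁, h₂]
    nlinarith [mul_nonneg hs₁.le (sq_nonneg (deriv u₁ y)),
      mul_nonneg hs₂.le (sq_nonneg (deriv u₂ y))]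
  rw [ha₂, hb₂, div_div_eq_mul_div, div_div_eq_mul_div, ← add_div, div_le_one hμ]
  linarith [hφx]

theorem pointwise_ellipse_bound
    (g₁₁ g₂₂ g₁₂ μ a b : ℝ)
    (hg₁₁ : 0 < g₁₁) (hg₂₂ : 0 < g₂₂)
    (hg₁₂ : Real.sqrt (g₁₁ * g₂₂) < g₁₂) (hμ : 0 < μ)
    (ha : a = Real.sqrt μ / g₁₁ ^ ((1:ℝ)/4))
    (hb : b = Real.sqrt μ / g₂₂ ^ ((1:ℝ)/4))
    (u₁ u₂ : ℝ → ℝ)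
    (hu₁ : ContDiff ℝ 2 u₁) (hu₂ : ContDiff ℝ 2 u₂)
    (heq₁ : ∀ x, -(deriv (deriv u₁) x) + g₁₁ * (u₁ x ^ 2 - a^2) * u₁ x
      + g₁₂ * u₁ x * u₂ x ^ 2 = 0)
    (heq₂ : ∀ x, -(deriv (deriv u₂) x) + g₂₂ * (u₂ x ^ 2 - b^2) * u₂ x
      + g₁₂ * u₁ x ^ 2 * u₂ x = 0)
    (hL₁ : MemLp (deriv u₁) 2 volume)
    (hL₂ : MemLp (deriv u₂) 2 volume)
    (hplus : Tendsto (fun x => (u₁ x, u₂ x)) atTop (nhds (a, 0)))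
    (hminus : Tendsto (fun x => (u₁ x, u₂ x)) atBot (nhds (0, b))) :
    ∀ x : ℝ, u₁ x ^ 2 / a^2 + u₂ x ^ 2 / b^2 ≤ 1 :=
  pointwise_ellipse_bound_general g₁₁ g₂₂ g₁₂ μ a b hg₁₁ hg₂₂ hg₁₂ hμ ha hb u₁ u₂ hu₁ hu₂ heq₁ heq₂
    hplus hminus
end

section
/- Consider the spectral problem L₊Φ_R = −λΦ_I, L₋Φ_I = λΦ_R, where L₊ and L₋ are self-adjoint operators on L²(ℝ;ℝ²) with L₋ ≥ 0 and L₊ ≥ 0, zero a simple isolated eigenvalue of L₊ with eigenvector ψ₀, and L₊ coercive on {ψ₀}^⊥ (i.e. ⟨L₊⁻¹Φ,Φ⟩ ≥ C‖Φ‖² for Φ ∈ {ψ₀}^⊥ for some C > 0). Then any eigenvalue λ with a nontrivial eigenvector (Φ_R, Φ_I) satisfies λ² ≤ 0, i.e. λ is purely imaginary. -/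
open InnerProductSpace Complex

/-!
Pairing the two equations with `ΦR` and `ΦI` gives, for `s = ⟪ΦR, ΦI⟫`,
`⟪ΦR, L₊ ΦR⟫ = -λ s` and `⟪ΦI, L₋ ΦI⟫ = λ s̄`, both nonnegative reals. Hence
`λ² |s|² = -⟪ΦR, L₊ ΦR⟫ ⟪ΦI, L₋ ΦI⟫ ≤ 0`, so `λ²` is a nonpositive real and `Re λ = 0` when `s ≠ 0`.
If `s = 0` both quadratic forms vanish; a positive operator whose form vanishes at `x` kills `x`
(write it as `S† S`), so `λ ΦI = λ ΦR = 0` and `λ = 0`.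
-/

open scoped ComplexOrder ComplexConjugate

namespace ContinuousLinearMap

variable {H : Type*} [NormedAddCommGroup H] [InnerProductSpace ℂ H] [CompleteSpace H]

theorem isPositive_of_isSelfAdjoint_of_re_inner_nonneg {T : H →L[ℂ] H} (hT : IsSelfAdjoint T)
    (hpos : ∀ x, 0 ≤ (⟪x, T x⟫_ℂ).re) : T.IsPositive :=
  isPositive_def'.mpr ⟨hT, fun x => by simpa [reApplyInnerSelf, inner_re_symm] using hpos x⟩

theorem IsPositive.apply_eq_zero_of_inner_eq_zero {T : H →L[ℂ] H} (hT : T.IsPositive) {x : H}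
    (hx : ⟪x, T x⟫_ℂ = 0) : T x = 0 := by
  obtain ⟨S, rfl⟩ := CStarAlgebra.nonneg_iff_eq_star_mul_self.mp ((nonneg_iff_isPositive T).mpr hT)
  have hSx : S x = 0 := by
    rwa [star_eq_adjoint, mul_apply_eq_comp, adjoint_inner_right, inner_self_eq_zero] at hx
  simp [hSx]

end ContinuousLinearMap

theorem Complex.re_eq_zero_of_neg_mul_nonneg_of_mul_conj_nonneg {lam s : ℂ} (hs : s ≠ 0)
    (h₁ : 0 ≤ -(lam * s)) (h₂ : 0 ≤ lam * conj s) : lam.re = 0 := by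
  have hprod : lam ^ 2 * (normSq s : ℂ) = -(-(lam * s) * (lam * conj s)) := by
    rw [← mul_conj]; ring
  have hnonpos : lam ^ 2 * (normSq s : ℂ) ≤ 0 := hprod ▸ neg_nonpos.mpr (mul_nonneg h₁ h₂)
  have hpos : (0 : ℂ) < normSq s := by exact_mod_cast normSq_pos.mpr hs
  refine sq_nonpos_iff.mp ?_
  calc lam ^ 2 = lam ^ 2 * (normSq s : ℂ) * (normSq s : ℂ)⁻¹ := by field_simp [hpos.ne']
    _ ≤ 0 := mul_nonpos_of_nonpos_of_nonneg hnonpos (inv_nonneg.mpr hpos.le)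

theorem spectral_stability_abstract_general
    {H : Type*} [NormedAddCommGroup H] [InnerProductSpace ℂ H] [CompleteSpace H]
    (Lp Lm : H →L[ℂ] H)
    (hLp : IsSelfAdjoint Lp) (hLm : IsSelfAdjoint Lm)
    (hLppos : ∀ x : H, 0 ≤ (⟪x, Lp x⟫_ℂ).re)
    (hLmpos : ∀ x : H, 0 ≤ (⟪x, Lm x⟫_ℂ).re)
    (lam : ℂ) (ΦR ΦI : H)
    (hnt : ¬(ΦR = 0 ∧ ΦI = 0))
    (heig₁ : Lp ΦR = -(lam • ΦI))
    (heig₂ : Lm ΦI = lam • ΦR) :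
    lam.re = 0 := by
  have hLp' := ContinuousLinearMap.isPositive_of_isSelfAdjoint_of_re_inner_nonneg hLp hLppos
  have hLm' := ContinuousLinearMap.isPositive_of_isSelfAdjoint_of_re_inner_nonneg hLm hLmpos
  have hR : ⟪ΦR, Lp ΦR⟫_ℂ = -(lam * ⟪ΦR, ΦI⟫_ℂ) := by
    rw [heig₁, inner_neg_right, inner_smul_right]
  have hI : ⟪ΦI, Lm ΦI⟫_ℂ = lam * conj ⟪ΦR, ΦI⟫_ℂ := by
    rw [heig₂, inner_smul_right, inner_conj_symm]
  by_cases hs : ⟪ΦR, ΦI⟫_ℂ = 0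
  · have hlamI : lam • ΦI = 0 := by
      rw [← neg_eq_zero, ← heig₁]
      exact hLp'.apply_eq_zero_of_inner_eq_zero (by simp [hR, hs])
    have hlamR : lam • ΦR = 0 := heig₂ ▸ hLm'.apply_eq_zero_of_inner_eq_zero (by simp [hI, hs])
    by_contra hre
    have hlam : lam ≠ 0 := fun h => hre (by simp [h])
    exact hnt ⟨(smul_eq_zero.mp hlamR).resolve_left hlam, (smul_eq_zero.mp hlamI).resolve_left hlam⟩
  · exact re_eq_zero_of_neg_mul_nonneg_of_mul_conj_nonneg hs
      (hR ▸ hLp'.inner_nonneg_right ΦR) (hI ▸ hLm'.inner_nonneg_right ΦI)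

theorem spectral_stability_abstract
    {H : Type*} [NormedAddCommGroup H] [InnerProductSpace ℂ H] [CompleteSpace H]
    (Lp Lm : H →L[ℂ] H)
    (hLp : IsSelfAdjoint Lp) (hLm : IsSelfAdjoint Lm)
    (hLppos : ∀ x : H, 0 ≤ (⟪x, Lp x⟫_ℂ).re)
    (hLmpos : ∀ x : H, 0 ≤ (⟪x, Lm x⟫_ℂ).re)
    (ψ₀ : H) (hψ₀ : ψ₀ ≠ 0)
    (hker : ∀ x : H, Lp x = 0 ↔ ∃ c : ℂ, x = c • ψ₀)
    (C : ℝ) (hC : 0 < C)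
    (hcoer : ∀ Φ Ψ : H, ⟪ψ₀, Φ⟫_ℂ = 0 → Lp Ψ = Φ →
      C * ‖Φ‖^2 ≤ (⟪Ψ, Φ⟫_ℂ).re)
    (lam : ℂ) (ΦR ΦI : H)
    (hnt : ¬(ΦR = 0 ∧ ΦI = 0))
    (heig₁ : Lp ΦR = -(lam • ΦI))
    (heig₂ : Lm ΦI = lam • ΦR) :
    lam.re = 0 :=
  spectral_stability_abstract_general Lp Lm hLp hLm hLppos hLmpos lam ΦR ΦI hnt heig₁ heig₂
end

section
/- Let c₁₁, c₂₂ : ℝ → ℝ be continuous with c₁₁, c₂₂ ≥ 0 outside a compact set, and let φ : ℝ → ℝ be C² with φ(x) → 0 as x → ±∞, satisfying −½φ'' + q(x)φ ≤ 0 on ℝ for a continuous function q ≥ 0 that is strictly positive on a set of positive measure. If moreover φ₊ = max(φ,0) ∈ H¹(ℝ), then ∫ℝ [½(φ₊')² + q φ₊²] dx ≤ 0, and hence φ(x) ≤ 0 for all x where q > 0 on a neighborhood, and in fact φ ≤ 0 on ℝ if q > 0 everywhere. -/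
/-!
Where `φ > 0` the inequality gives `φ'' ≥ 2 q φ ≥ 0`. If `φ(z) = M > 0`, the maximal interval
around `z` on which `φ > M / 2` is bounded because `φ → 0` at `±∞`; `φ` is convex on its closure,
so `M ≤ max (φ a) (φ b) = M / 2`, a contradiction. Hence `φ ≤ 0`, so `φ₊ = 0` and the energy
integral vanishes.
-/

open Filter MeasureTheory Set

lemma exists_le_forall_Ioc_lt {φ : ℝ → ℝ} (hφ : Continuous φ) {z c : ℝ}
    (h : ∃ x ≤ z, φ x ≤ c) : ∃ a ≤ z, φ a ≤ c ∧ ∀ x ∈ Ioc a z, c < φ x := by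
  set S := {x | x ≤ z ∧ φ x ≤ c}
  have hS : IsClosed S :=
    (isClosed_le continuous_id continuous_const).inter (isClosed_le hφ continuous_const)
  have hbdd : BddAbove S := ⟨z, fun x hx => hx.1⟩
  obtain ⟨haz, hac⟩ : sSup S ∈ S := hS.csSup_mem h hbdd
  refine ⟨sSup S, haz, hac, fun x hx => ?_⟩
  by_contra! hxc
  exact hx.1.not_ge (le_csSup hbdd ⟨hx.2, hxc⟩)

lemma exists_ge_forall_Ico_lt {φ : ℝ → ℝ} (hφ : Continuous φ) {z c : ℝ}
    (h : ∃ x ≥ z, φ x ≤ c) : ∃ b ≥ z, φ b ≤ c ∧ ∀ x ∈ Ico z b, c < φ x := by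
  obtain ⟨x, hxz, hxc⟩ := h
  obtain ⟨a, haz, hac, ha⟩ := exists_le_forall_Ioc_lt (hφ.comp continuous_neg) (z := -z)
    ⟨-x, neg_le_neg hxz, by simpa using hxc⟩
  refine ⟨-a, le_neg_of_le_neg haz, hac, fun y hy => ?_⟩
  simpa using ha (-y) ⟨lt_neg_of_lt_neg hy.2, neg_le_neg hy.1⟩

theorem nonpos_of_deriv2_nonneg_of_pos {φ : ℝ → ℝ} (hφ : ContDiff ℝ 2 φ)
    (htop : Tendsto φ atTop (nhds 0)) (hbot : Tendsto φ atBot (nhds 0))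
    (hφ'' : ∀ x, 0 < φ x → 0 ≤ deriv (deriv φ) x) (z : ℝ) : φ z ≤ 0 := by
  by_contra! hz
  have hc : 0 < φ z / 2 := by linarith
  have hφc : Continuous φ := hφ.continuous
  obtain ⟨a, haz, hac, ha⟩ := exists_le_forall_Ioc_lt hφc
    (((hbot.eventually (eventually_lt_nhds hc)).and (eventually_le_atBot z)).exists.imp
      fun x hx => ⟨hx.2, hx.1.le⟩)
  obtain ⟨b, hbz, hbc, hb⟩ := exists_ge_forall_Ico_lt hφc
    (((htop.eventually (eventually_lt_nhds hc)).and (eventually_ge_atTop z)).exists.imp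
      fun x hx => ⟨hx.2, hx.1.le⟩)
  have hconv : ConvexOn ℝ (Icc a b) φ := by
    have hφ' : ContDiff ℝ 1 (deriv φ) := (contDiff_succ_iff_deriv (n := 1)).1 hφ |>.2.2
    refine convexOn_of_deriv2_nonneg (convex_Icc a b) hφc.continuousOn
      (hφ.differentiable two_ne_zero).differentiableOn
      (hφ'.differentiable one_ne_zero).differentiableOn fun x hx => hφ'' x ?_
    rw [interior_Icc] at hx
    rcases le_total x z with hxz | hxz
    · exact hc.trans (ha x ⟨hx.1, hxz⟩)
    · exact hc.trans (hb x ⟨hxz, hx.2⟩)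
  have hle := hconv.le_max_of_mem_Icc (left_mem_Icc.2 (haz.trans hbz))
    (right_mem_Icc.2 (haz.trans hbz)) ⟨haz, hbz⟩
  linarith [max_le hac hbc]

theorem energy_maximum_principle_general
    (φ : ℝ → ℝ) (hφ : ContDiff ℝ 2 φ)
    (hlim_top : Tendsto φ atTop (nhds 0)) (hlim_bot : Tendsto φ atBot (nhds 0))
    (q : ℝ → ℝ) (hqpos : ∀ x, 0 ≤ q x)
    (hineq : ∀ x, -(1/2) * deriv (deriv φ) x + q x * φ x ≤ 0) :
    (∫ x : ℝ, ((1/2) * (deriv (fun y => max (φ y) 0) x)^2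
        + q x * (max (φ x) 0)^2) ≤ 0) ∧
    (∀ x : ℝ, (∀ᶠ y in nhds x, 0 < q y) → φ x ≤ 0) ∧
    ((∀ x, 0 < q x) → ∀ x, φ x ≤ 0) := by
  have hle : ∀ x, φ x ≤ 0 := nonpos_of_deriv2_nonneg_of_pos hφ hlim_top hlim_bot
    fun x hx => by nlinarith [hineq x, mul_nonneg (hqpos x) hx.le]
  have hpos_part : ∀ y, max (φ y) 0 = 0 := fun y => max_eq_right (hle y)
  refine ⟨?_, fun x _ => hle x, fun _ x => hle x⟩
  simp [hpos_part]

theorem energy_maximum_principle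
    (c₁₁ c₂₂ : ℝ → ℝ) (hc₁₁ : Continuous c₁₁) (hc₂₂ : Continuous c₂₂)
    (hout : ∃ K : Set ℝ, IsCompact K ∧ ∀ x ∉ K, 0 ≤ c₁₁ x ∧ 0 ≤ c₂₂ x)
    (φ : ℝ → ℝ) (hφ : ContDiff ℝ 2 φ)
    (hlim_top : Tendsto φ atTop (nhds 0)) (hlim_bot : Tendsto φ atBot (nhds 0))
    (q : ℝ → ℝ) (hq : Continuous q) (hqpos : ∀ x, 0 ≤ q x)
    (hqset : 0 < volume {x | 0 < q x})
    (hineq : ∀ x, -(1/2) * deriv (deriv φ) x + q x * φ x ≤ 0)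
    (hH1a : MemLp (fun x => max (φ x) 0) 2 volume)
    (hH1b : MemLp (deriv (fun x => max (φ x) 0)) 2 volume) :
    (∫ x : ℝ, ((1/2) * (deriv (fun y => max (φ y) 0) x)^2
        + q x * (max (φ x) 0)^2) ≤ 0) ∧
    (∀ x : ℝ, (∀ᶠ y in nhds x, 0 < q y) → φ x ≤ 0) ∧
    ((∀ x, 0 < q x) → ∀ x, φ x ≤ 0) :=
  energy_maximum_principle_general φ hφ hlim_top hlim_bot q hqpos hineq
end

section
/- Suppose (u₁,u₂) solves the unperturbed domain wall system and V ∈ C²(ℝ) with V' and V'' decaying suitably, and (w₁,w₂) solves the linear inhomogeneous system −w₁'' + (3u₁² + γu₂² − 1)w₁ + 2γu₁u₂w₂ = −Vu₁, −w₂'' + (γu₁² + 3u₂² − 1)w₂ + 2γu₁u₂w₁ = −Vu₂, with all functions and derivatives decaying exponentially at ±∞. Then σ := ∫ℝ [V((u₁')² + (u₂')²) + 6u₁w₁(u₁')² + 6u₂w₂(u₂')² + 2γu₂w₂(u₁')² + 2γu₁w₁(u₂')² + 4γ(u₁w₂ + u₂w₁)u₁'u₂'] dx equals ½∫ℝ V''(x)(u₁²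 + u₂² − 1) dx. -/
/-!
Write `u = (u₁, u₂)` and `F(u) = (|u|² - 1) u + (γ - 1) (u₂² u₁, u₁² u₂)` for the nonlinearity, so
that the system reads `u'' = F(u)` and `-w'' + DF(u) w = -V u`. Differentiating `u'' = F(u)` gives
`u''' = DF(u) u'`, and once more `L u'' = -D²F(u)[u', u']` with `L = -∂² + DF(u)`; the last five
terms of the integrand are `⟪D²F(u)[u', u'], w⟫`. Since `L` is symmetric and `L w = -V u`,
`∫ ⟪D²F(u)[u', u'], w⟫ = ∫ V ⟪u, u''⟫ = -∫ V |u'|² + ½ ∫ V'' (|u|² - 1)` after two more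
integrations by parts. All of this is a single exact derivative: with `u''` and `u'''` replaced
through the equation, the integrand minus `½ V'' (|u|² - 1)` is the derivative of
`½ (V (|u|²)' - V' (|u|² - 1)) + ⟪u''', w⟫ - ⟪u'', w'⟫`, and this primitive is integrable because
each of its terms has an exponentially decaying factor, the others being bounded.
-/

open Filter MeasureTheory Set
open scoped ENNReal

lemma integrable_exp_neg_mul_abs {δ : ℝ} (hδ : 0 < δ) :
    Integrable fun x : ℝ => Real.exp (-δ * |x|) := by
  rw [← integrableOn_univ, ← Iic_union_Ioi (a := 0)]
  refine IntegrableOn.union ?_ ?_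
  · refine (integrableOn_exp_mul_Iic hδ 0).congr_fun (fun x hx => ?_) measurableSet_Iic
    rw [abs_of_nonpos (mem_Iic.mp hx), mul_neg, neg_mul, neg_neg]
  · refine (exp_neg_integrableOn_Ioi 0 hδ).congr_fun (fun x hx => ?_) measurableSet_Ioi
    simp only [abs_of_pos (mem_Ioi.mp hx), neg_mul]

lemma mul_exp_neg_mul_abs_le {M δ : ℝ} (hM : 0 ≤ M) (hδ : 0 ≤ δ) (x : ℝ) :
    M * Real.exp (-δ * |x|) ≤ M :=
  mul_le_of_le_one_right hM (Real.exp_le_one_iff.mpr (by nlinarith [abs_nonneg x]))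

lemma integrable_of_abs_le_mul_exp_neg_abs {f : ℝ → ℝ} {M δ : ℝ} (hδ : 0 < δ)
    (hf : AEStronglyMeasurable f) (h : ∀ x, |f x| ≤ M * Real.exp (-δ * |x|)) :
    Integrable f :=
  ((integrable_exp_neg_mul_abs hδ).const_mul M).mono' hf (ae_of_all _ h)

lemma memLp_top_of_abs_le_mul_exp_neg_abs {f : ℝ → ℝ} {M δ : ℝ} (hδ : 0 ≤ δ)
    (hf : AEStronglyMeasurable f) (h : ∀ x, |f x| ≤ M * Real.exp (-δ * |x|)) :
    MemLp f ∞ := by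
  have hM : 0 ≤ M := by simpa using (abs_nonneg _).trans (h 0)
  exact memLp_top_of_bound hf M (ae_of_all _ fun x => (h x).trans (mul_exp_neg_mul_abs_le hM hδ x))

lemma memLp_top_of_abs_sq_add_sq_sub_one_le {f g : ℝ → ℝ} {M : ℝ}
    (hf : AEStronglyMeasurable f) (hg : AEStronglyMeasurable g)
    (h : ∀ x, |f x ^ 2 + g x ^ 2 - 1| ≤ M) : MemLp f ∞ ∧ MemLp g ∞ := by
  have hfg (x : ℝ) : |f x| ≤ M + 2 ∧ |g x| ≤ M + 2 := by
    have := abs_le.mp (h x)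
    constructor <;>
      nlinarith [sq_abs (f x), sq_abs (g x), sq_nonneg (|f x| - 1), sq_nonneg (|g x| - 1)]
  exact ⟨memLp_top_of_bound hf _ (ae_of_all _ fun x => (hfg x).1),
    memLp_top_of_bound hg _ (ae_of_all _ fun x => (hfg x).2)⟩

noncomputable section Melnikov

variable (γ : ℝ) (u₁ u₂ w₁ w₂ V : ℝ → ℝ)

def melnikovIntegrand (x : ℝ) : ℝ :=
  V x * ((deriv u₁ x)^2 + (deriv u₂ x)^2)
    + 6 * u₁ x * w₁ x * (deriv u₁ x)^2
    + 6 * u₂ x * w₂ x * (deriv u₂ x)^2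
    + 2 * γ * u₂ x * w₂ x * (deriv u₁ x)^2
    + 2 * γ * u₁ x * w₁ x * (deriv u₂ x)^2
    + 4 * γ * (u₁ x * w₂ x + u₂ x * w₁ x) * deriv u₁ x * deriv u₂ x

def melnikovPrimitive (x : ℝ) : ℝ :=
  (1/2) * (V x * (2 * u₁ x * deriv u₁ x + 2 * u₂ x * deriv u₂ x)
      - deriv V x * (u₁ x ^ 2 + u₂ x ^ 2 - 1))
    - (u₁ x ^ 2 + γ * u₂ x ^ 2 - 1) * u₁ x * deriv w₁ x
    - (γ * u₁ x ^ 2 + u₂ x ^ 2 - 1) * u₂ x * deriv w₂ x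
    + ((3 * u₁ x ^ 2 + γ * u₂ x ^ 2 - 1) * deriv u₁ x + 2 * γ * u₁ x * u₂ x * deriv u₂ x) * w₁ x
    + ((γ * u₁ x ^ 2 + 3 * u₂ x ^ 2 - 1) * deriv u₂ x + 2 * γ * u₁ x * u₂ x * deriv u₁ x) * w₂ x

variable {γ u₁ u₂ w₁ w₂ V}

lemma ContDiff.hasDerivAt_and_hasDerivAt_deriv {f : ℝ → ℝ} (hf : ContDiff ℝ 2 f) (x : ℝ) :
    HasDerivAt f (deriv f x) x ∧ HasDerivAt (deriv f) (deriv (deriv f) x) x :=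
  ⟨(hf.differentiable two_ne_zero x).hasDerivAt, (hf.differentiable_deriv_two x).hasDerivAt⟩

lemma hasDerivAt_melnikovPrimitive {x : ℝ}
    (hu₁ : ContDiff ℝ 2 u₁) (hu₂ : ContDiff ℝ 2 u₂) (hw₁ : ContDiff ℝ 2 w₁)
    (hw₂ : ContDiff ℝ 2 w₂) (hV : ContDiff ℝ 2 V)
    (heq₁ : -(deriv (deriv u₁) x) + (u₁ x ^ 2 + γ * u₂ x ^ 2 - 1) * u₁ x = 0)
    (heq₂ : -(deriv (deriv u₂) x) + (γ * u₁ x ^ 2 + u₂ x ^ 2 - 1) * u₂ x = 0)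
    (hweq₁ : -(deriv (deriv w₁) x) + (3 * u₁ x ^ 2 + γ * u₂ x ^ 2 - 1) * w₁ x
      + 2 * γ * u₁ x * u₂ x * w₂ x = -(V x * u₁ x))
    (hweq₂ : -(deriv (deriv w₂) x) + (γ * u₁ x ^ 2 + 3 * u₂ x ^ 2 - 1) * w₂ x
      + 2 * γ * u₁ x * u₂ x * w₁ x = -(V x * u₂ x)) :
    HasDerivAt (melnikovPrimitive γ u₁ u₂ w₁ w₂ V)
      (melnikovIntegrand γ u₁ u₂ w₁ w₂ V x
        - 1/2 * (deriv (deriv V) x * (u₁ x ^ 2 + u₂ x ^ 2 - 1))) x := by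
  obtain ⟨hu₁, hu₁'⟩ := hu₁.hasDerivAt_and_hasDerivAt_deriv x
  obtain ⟨hu₂, hu₂'⟩ := hu₂.hasDerivAt_and_hasDerivAt_deriv x
  obtain ⟨hw₁, hw₁'⟩ := hw₁.hasDerivAt_and_hasDerivAt_deriv x
  obtain ⟨hw₂, hw₂'⟩ := hw₂.hasDerivAt_and_hasDerivAt_deriv x
  obtain ⟨hV, hV'⟩ := hV.hasDerivAt_and_hasDerivAt_deriv x
  have hK₁ := ((hu₁.pow 2).add ((hu₂.pow 2).const_mul γ)).sub_const 1
  have hK₂ := (((hu₁.pow 2).const_mul γ).add (hu₂.pow 2)).sub_const 1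
  have hK₃ := (((hu₁.pow 2).const_mul 3).add ((hu₂.pow 2).const_mul γ)).sub_const 1
  have hK₄ := (((hu₁.pow 2).const_mul γ).add ((hu₂.pow 2).const_mul 3)).sub_const 1
  have hc := (hu₁.const_mul (2 * γ)).mul hu₂
  have hP := ((hV.mul (((hu₁.const_mul 2).mul hu₁').add ((hu₂.const_mul 2).mul hu₂'))).sub
    (hV'.mul (((hu₁.pow 2).add (hu₂.pow 2)).sub_const 1))).const_mul (1/2)
  have hH := (((hP.sub ((hK₁.mul hu₁).mul hw₁')).sub ((hK₂.mul hu₂).mul hw₂')).add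
    (((hK₃.mul hu₁').add (hc.mul hu₂')).mul hw₁)).add (((hK₄.mul hu₂').add (hc.mul hu₁')).mul hw₂)
  refine (hH.congr_deriv ?_).congr_of_eventuallyEq (.of_forall fun y => rfl)
  unfold melnikovIntegrand
  simp only [Pi.add_apply, Pi.mul_apply, Pi.pow_apply, Nat.cast_ofNat]
  -- each equation enters with the coefficient of its second derivative in the raw derivative
  linear_combination
    -(V x * u₁ x + (3 * u₁ x ^ 2 + γ * u₂ x ^ 2 - 1) * w₁ x + 2 * γ * u₁ x * u₂ x * w₂ x) * heq₁
    - (V x * u₂ x + (γ * u₁ x ^ 2 + 3 * u₂ x ^ 2 - 1) * w₂ x + 2 * γ * u₁ x * u₂ x * w₁ x) * heq₂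
    + (u₁ x ^ 2 + γ * u₂ x ^ 2 - 1) * u₁ x * hweq₁ + (γ * u₁ x ^ 2 + u₂ x ^ 2 - 1) * u₂ x * hweq₂

lemma MeasureTheory.MemLp.sq_top {f : ℝ → ℝ} (hf : MemLp f ∞) : MemLp (fun x => f x ^ 2) ∞ := by
  simp only [sq]
  exact hf.mul hf

lemma MeasureTheory.Integrable.sq_of_memLp_top {f : ℝ → ℝ} (hf : Integrable f) (hf' : MemLp f ∞) :
    Integrable (fun x => f x ^ 2) := by
  simp only [sq]
  exact hf.mul_of_top_left hf'

lemma integrable_melnikovIntegrand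
    (hu₁b : MemLp u₁ ∞) (hu₂b : MemLp u₂ ∞) (hVb : MemLp V ∞)
    (hdu₁ : Integrable (deriv u₁)) (hdu₂ : Integrable (deriv u₂))
    (hdu₁b : MemLp (deriv u₁) ∞) (hdu₂b : MemLp (deriv u₂) ∞)
    (hw₁ : Integrable w₁) (hw₂ : Integrable w₂) :
    Integrable (melnikovIntegrand γ u₁ u₂ w₁ w₂ V) := by
  unfold melnikovIntegrand
  refine .add (.add (.add (.add (.add ?_ ?_) ?_) ?_) ?_) ?_
  · exact ((hdu₁.sq_of_memLp_top hdu₁b).add (hdu₂.sq_of_memLp_top hdu₂b)).mul_of_top_right hVb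
  · exact (hw₁.mul_of_top_right (hu₁b.const_mul 6)).mul_of_top_left hdu₁b.sq_top
  · exact (hw₂.mul_of_top_right (hu₂b.const_mul 6)).mul_of_top_left hdu₂b.sq_top
  · exact (hw₂.mul_of_top_right (hu₂b.const_mul (2 * γ))).mul_of_top_left hdu₁b.sq_top
  · exact (hw₁.mul_of_top_right (hu₁b.const_mul (2 * γ))).mul_of_top_left hdu₂b.sq_top
  · exact (((hw₂.mul_of_top_right hu₁b).add (hw₁.mul_of_top_right hu₂b)).const_mul (4 * γ)
      |>.mul_of_top_left hdu₁b).mul_of_top_left hdu₂b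

lemma integrable_melnikovPrimitive
    (hu₁b : MemLp u₁ ∞) (hu₂b : MemLp u₂ ∞) (hVb : MemLp V ∞) (hV'b : MemLp (deriv V) ∞)
    (hdu₁ : Integrable (deriv u₁)) (hdu₂ : Integrable (deriv u₂))
    (hdu₁b : MemLp (deriv u₁) ∞) (hdu₂b : MemLp (deriv u₂) ∞)
    (hw₁ : Integrable w₁) (hw₂ : Integrable w₂)
    (hdw₁ : Integrable (deriv w₁)) (hdw₂ : Integrable (deriv w₂))
    (hq : Integrable fun x => u₁ x ^ 2 + u₂ x ^ 2 - 1) :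
    Integrable (melnikovPrimitive γ u₁ u₂ w₁ w₂ V) := by
  have hK {a b : ℝ} : MemLp (fun x => a * u₁ x ^ 2 + b * u₂ x ^ 2 - 1) ∞ :=
    ((hu₁b.sq_top.const_mul a).add (hu₂b.sq_top.const_mul b)).sub (memLp_top_const 1)
  have hc : MemLp (fun x => 2 * γ * u₁ x * u₂ x) ∞ := hu₂b.mul' (hu₁b.const_mul (2 * γ))
  unfold melnikovPrimitive
  refine .add (.add (.sub (.sub (.const_mul (.sub ?_ ?_) _) ?_) ?_) ?_) ?_
  · exact ((hdu₁.mul_of_top_right (hu₁b.const_mul 2)).add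
      (hdu₂.mul_of_top_right (hu₂b.const_mul 2))).mul_of_top_right hVb
  · exact hq.mul_of_top_right hV'b
  · exact hdw₁.mul_of_top_right
      (hu₁b.mul' ((hu₁b.sq_top.add (hu₂b.sq_top.const_mul γ)).sub (memLp_top_const 1)))
  · exact hdw₂.mul_of_top_right
      (hu₂b.mul' (((hu₁b.sq_top.const_mul γ).add hu₂b.sq_top).sub (memLp_top_const 1)))
  · exact hw₁.mul_of_top_right ((hdu₁b.mul' hK).add (hdu₂b.mul' hc))
  · exact hw₂.mul_of_top_right ((hdu₂b.mul' hK).add (hdu₁b.mul' hc))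

theorem integral_melnikovIntegrand
    (hu₁ : ContDiff ℝ 2 u₁) (hu₂ : ContDiff ℝ 2 u₂) (hw₁ : ContDiff ℝ 2 w₁)
    (hw₂ : ContDiff ℝ 2 w₂) (hV : ContDiff ℝ 2 V)
    (heq₁ : ∀ x, -(deriv (deriv u₁) x) + (u₁ x ^ 2 + γ * u₂ x ^ 2 - 1) * u₁ x = 0)
    (heq₂ : ∀ x, -(deriv (deriv u₂) x) + (γ * u₁ x ^ 2 + u₂ x ^ 2 - 1) * u₂ x = 0)
    (hweq₁ : ∀ x, -(deriv (deriv w₁) x) + (3 * u₁ x ^ 2 + γ * u₂ x ^ 2 - 1) * w₁ x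
      + 2 * γ * u₁ x * u₂ x * w₂ x = -(V x * u₁ x))
    (hweq₂ : ∀ x, -(deriv (deriv w₂) x) + (γ * u₁ x ^ 2 + 3 * u₂ x ^ 2 - 1) * w₂ x
      + 2 * γ * u₁ x * u₂ x * w₁ x = -(V x * u₂ x))
    (hu₁b : MemLp u₁ ∞) (hu₂b : MemLp u₂ ∞) (hVb : MemLp V ∞) (hV'b : MemLp (deriv V) ∞)
    (hV''b : MemLp (deriv (deriv V)) ∞)
    (hdu₁ : Integrable (deriv u₁)) (hdu₂ : Integrable (deriv u₂))
    (hdu₁b : MemLp (deriv u₁) ∞) (hdu₂b : MemLp (deriv u₂) ∞)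
    (hw₁i : Integrable w₁) (hw₂i : Integrable w₂)
    (hdw₁ : Integrable (deriv w₁)) (hdw₂ : Integrable (deriv w₂))
    (hq : Integrable fun x => u₁ x ^ 2 + u₂ x ^ 2 - 1) :
    ∫ x, melnikovIntegrand γ u₁ u₂ w₁ w₂ V x
      = 1/2 * ∫ x, deriv (deriv V) x * (u₁ x ^ 2 + u₂ x ^ 2 - 1) := by
  have hσ : Integrable (melnikovIntegrand γ u₁ u₂ w₁ w₂ V) :=
    integrable_melnikovIntegrand hu₁b hu₂b hVb hdu₁ hdu₂ hdu₁b hdu₂b hw₁i hw₂i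
  have hVq : Integrable fun x => 1/2 * (deriv (deriv V) x * (u₁ x ^ 2 + u₂ x ^ 2 - 1)) :=
    (hq.mul_of_top_right hV''b).const_mul (1/2)
  have hH := integral_eq_zero_of_hasDerivAt_of_integrable
    (fun x => hasDerivAt_melnikovPrimitive hu₁ hu₂ hw₁ hw₂ hV (heq₁ x) (heq₂ x) (hweq₁ x) (hweq₂ x))
    (hσ.sub hVq)
    (integrable_melnikovPrimitive hu₁b hu₂b hVb hV'b hdu₁ hdu₂ hdu₁b hdu₂b hw₁i hw₂i hdw₁ hdw₂ hq)
  rwa [integral_sub hσ hVq, integral_const_mul, sub_eq_zero] at hH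

end Melnikov

theorem melnikov_sigma_identity_general
    (γ : ℝ)
    (u₁ u₂ : ℝ → ℝ)
    (hu₁ : ContDiff ℝ 2 u₁) (hu₂ : ContDiff ℝ 2 u₂)
    (heq₁ : ∀ x, -(deriv (deriv u₁) x) + (u₁ x ^ 2 + γ * u₂ x ^ 2 - 1) * u₁ x = 0)
    (heq₂ : ∀ x, -(deriv (deriv u₂) x) + (γ * u₁ x ^ 2 + u₂ x ^ 2 - 1) * u₂ x = 0)
    (V : ℝ → ℝ) (hV : ContDiff ℝ 2 V)
    (w₁ w₂ : ℝ → ℝ)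
    (hw₁ : ContDiff ℝ 2 w₁) (hw₂ : ContDiff ℝ 2 w₂)
    (hweq₁ : ∀ x, -(deriv (deriv w₁) x)
      + (3 * u₁ x ^ 2 + γ * u₂ x ^ 2 - 1) * w₁ x
      + 2 * γ * u₁ x * u₂ x * w₂ x = -(V x * u₁ x))
    (hweq₂ : ∀ x, -(deriv (deriv w₂) x)
      + (γ * u₁ x ^ 2 + 3 * u₂ x ^ 2 - 1) * w₂ x
      + 2 * γ * u₁ x * u₂ x * w₁ x = -(V x * u₂ x))
    (hdecay : ∃ M > 0, ∃ δ > 0, ∀ x : ℝ,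
      |deriv u₁ x| + |deriv u₂ x| + |w₁ x| + |w₂ x|
        + |deriv w₁ x| + |deriv w₂ x| + |u₁ x ^ 2 + u₂ x ^ 2 - 1|
          ≤ M * Real.exp (-δ * |x|))
    (hVbdd : ∃ M, ∀ x : ℝ, |V x| + |deriv V x| + |deriv (deriv V) x| ≤ M) :
    (∫ x : ℝ,
      (V x * ((deriv u₁ x)^2 + (deriv u₂ x)^2)
        + 6 * u₁ x * w₁ x * (deriv u₁ x)^2
        + 6 * u₂ x * w₂ x * (deriv u₂ x)^2
        + 2 * γ * u₂ x * w₂ x * (deriv u₁ x)^2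
        + 2 * γ * u₁ x * w₁ x * (deriv u₂ x)^2
        + 4 * γ * (u₁ x * w₂ x + u₂ x * w₁ x) * deriv u₁ x * deriv u₂ x))
    = (1/2) * ∫ x : ℝ, deriv (deriv V) x * (u₁ x ^ 2 + u₂ x ^ 2 - 1) := by
  obtain ⟨M, hM, δ, hδ, hdec⟩ := hdecay
  obtain ⟨K, hK⟩ := hVbdd
  have decay (f : ℝ → ℝ) (hf : Measurable f) (h : ∀ x, |f x| ≤ M * Real.exp (-δ * |x|)) :
      Integrable f ∧ MemLp f ∞ :=
    ⟨integrable_of_abs_le_mul_exp_neg_abs hδ hf.aestronglyMeasurable h,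
      memLp_top_of_abs_le_mul_exp_neg_abs hδ.le hf.aestronglyMeasurable h⟩
  have bdd (f : ℝ → ℝ) (hf : Measurable f) (h : ∀ x, |f x| ≤ K) : MemLp f ∞ :=
    memLp_top_of_bound hf.aestronglyMeasurable K (ae_of_all _ h)
  have hq (x : ℝ) : |u₁ x ^ 2 + u₂ x ^ 2 - 1| ≤ M * Real.exp (-δ * |x|) :=
    (hdec x).trans' (sub_nonneg.mp (by ring_nf; positivity))
  obtain ⟨hu₁b, hu₂b⟩ := memLp_top_of_abs_sq_add_sq_sub_one_le hu₁.continuous.aestronglyMeasurable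
    hu₂.continuous.aestronglyMeasurable fun x => (hq x).trans (mul_exp_neg_mul_abs_le hM.le hδ.le x)
  obtain ⟨hdu₁, hdu₁b⟩ := decay _ (measurable_deriv u₁) fun x =>
    (hdec x).trans' (sub_nonneg.mp (by ring_nf; positivity))
  obtain ⟨hdu₂, hdu₂b⟩ := decay _ (measurable_deriv u₂) fun x =>
    (hdec x).trans' (sub_nonneg.mp (by ring_nf; positivity))
  exact integral_melnikovIntegrand hu₁ hu₂ hw₁ hw₂ hV heq₁ heq₂ hweq₁ hweq₂ hu₁b hu₂b
    (bdd _ hV.continuous.measurable fun x => (hK x).trans' (sub_nonneg.mp (by ring_nf; positivity)))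
    (bdd _ (measurable_deriv _) fun x => (hK x).trans' (sub_nonneg.mp (by ring_nf; positivity)))
    (bdd _ (measurable_deriv _) fun x => (hK x).trans' (sub_nonneg.mp (by ring_nf; positivity)))
    hdu₁ hdu₂ hdu₁b hdu₂b
    (decay _ hw₁.continuous.measurable fun x =>
      (hdec x).trans' (sub_nonneg.mp (by ring_nf; positivity))).1
    (decay _ hw₂.continuous.measurable fun x =>
      (hdec x).trans' (sub_nonneg.mp (by ring_nf; positivity))).1
    (decay _ (measurable_deriv w₁) fun x =>
      (hdec x).trans' (sub_nonneg.mp (by ring_nf; positivity))).1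
    (decay _ (measurable_deriv w₂) fun x =>
      (hdec x).trans' (sub_nonneg.mp (by ring_nf; positivity))).1
    (decay _ (hu₁.continuous.measurable.pow_const 2 |>.add
      (hu₂.continuous.measurable.pow_const 2) |>.sub_const 1) hq).1

theorem melnikov_sigma_identity
    (γ : ℝ) (hγ : 1 < γ)
    (u₁ u₂ : ℝ → ℝ)
    (hu₁ : ContDiff ℝ 2 u₁) (hu₂ : ContDiff ℝ 2 u₂)
    (heq₁ : ∀ x, -(deriv (deriv u₁) x) + (u₁ x ^ 2 + γ * u₂ x ^ 2 - 1) * u₁ x = 0)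
    (heq₂ : ∀ x, -(deriv (deriv u₂) x) + (γ * u₁ x ^ 2 + u₂ x ^ 2 - 1) * u₂ x = 0)
    (hbc_top : Tendsto (fun x => (u₁ x, u₂ x)) atTop (nhds (1, 0)))
    (hbc_bot : Tendsto (fun x => (u₁ x, u₂ x)) atBot (nhds (0, 1)))
    (V : ℝ → ℝ) (hV : ContDiff ℝ 2 V)
    (w₁ w₂ : ℝ → ℝ)
    (hw₁ : ContDiff ℝ 2 w₁) (hw₂ : ContDiff ℝ 2 w₂)
    (hweq₁ : ∀ x, -(deriv (deriv w₁) x)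
      + (3 * u₁ x ^ 2 + γ * u₂ x ^ 2 - 1) * w₁ x
      + 2 * γ * u₁ x * u₂ x * w₂ x = -(V x * u₁ x))
    (hweq₂ : ∀ x, -(deriv (deriv w₂) x)
      + (γ * u₁ x ^ 2 + 3 * u₂ x ^ 2 - 1) * w₂ x
      + 2 * γ * u₁ x * u₂ x * w₁ x = -(V x * u₂ x))
    (hdecay : ∃ M > 0, ∃ δ > 0, ∀ x : ℝ,
      |deriv u₁ x| + |deriv u₂ x| + |w₁ x| + |w₂ x|
        + |deriv w₁ x| + |deriv w₂ x| + |u₁ x ^ 2 + u₂ x ^ 2 - 1|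
          ≤ M * Real.exp (-δ * |x|))
    (hVbdd : ∃ M, ∀ x : ℝ, |V x| + |deriv V x| + |deriv (deriv V) x| ≤ M) :
    (∫ x : ℝ,
      (V x * ((deriv u₁ x)^2 + (deriv u₂ x)^2)
        + 6 * u₁ x * w₁ x * (deriv u₁ x)^2
        + 6 * u₂ x * w₂ x * (deriv u₂ x)^2
        + 2 * γ * u₂ x * w₂ x * (deriv u₁ x)^2
        + 2 * γ * u₁ x * w₁ x * (deriv u₂ x)^2
        + 4 * γ * (u₁ x * w₂ x + u₂ x * w₁ x) * deriv u₁ x * deriv u₂ x))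
    = (1/2) * ∫ x : ℝ, deriv (deriv V) x * (u₁ x ^ 2 + u₂ x ^ 2 - 1) :=
  melnikov_sigma_identity_general γ u₁ u₂ hu₁ hu₂ heq₁ heq₂ V hV w₁ w₂ hw₁ hw₂ hweq₁ hweq₂ hdecay
    hVbdd
end
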